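/- arXiv:1509.09047 — 3 statements merged into one kernel-verified Lean document; each statement's English description precedes it below -/
import Mathlib

section
/- For all v, w ∈ V, the distances in the simulated graph H satisfy D(v,w) ≤ dist_H(v,w) ≤ (1+ε̂)^{Λ+1} · D(v,w). -/
open scoped ENNReal

variable {V : Type*}

/-- Weight of a walk: sum of the edge weights over consecutive pairs of vertices. -/
noncomputable def walkWeight (w : V → V → ℝ≥0∞) : List V → ℝ≥0∞
  | [] => 0
  | [_] => 0
  | a :: b :: l => w a b + walkWeight w (b :: l)

/-- A walk from `u` to `v`: a nonempty list starting at `u` and ending at `v`. -/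
def IsWalk (l : List V) (u v : V) : Prop :=
  l ≠ [] ∧ l.head? = some u ∧ l.getLast? = some v

/-- Edge weights of the simulated graph `H`:
`w_H(v,w) = (1+ε)^(Λ - min(level v, level w)) · dd v w`. -/
noncomputable def wH (ε : ℝ) (Λ : ℕ) (level : V → ℕ) (dd : V → V → ℝ≥0∞)
    (v w : V) : ℝ≥0∞ :=
  ENNReal.ofReal (1 + ε) ^ (Λ - min (level v) (level w)) * dd v w

/-- Distance in the simulated graph `H`. -/
noncomputable def distH (ε : ℝ) (Λ : ℕ) (level : V → ℕ) (dd : V → V → ℝ≥0∞)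
    (v w : V) : ℝ≥0∞ :=
  sInf {c | ∃ l : List V, IsWalk l v w ∧ walkWeight (wH ε Λ level dd) l = c}

/-!
The lower bound holds walk by walk: `D` is a pseudometric dominated by every edge weight of `H`,
so by the triangle inequality it is dominated by the weight of every walk. The upper bound is
witnessed by the single edge `v w`, whose weight is at most `(1+ε)^Λ · dd v w ≤ (1+ε)^(Λ+1) · D v w`.
-/

section Walks

variable (w D : V → V → ℝ≥0∞)

theorem walkWeight_pair (a b : V) : walkWeight w [a, b] = w a b :=
  add_zero _

theorem le_walkWeight (hD0 : ∀ v, D v v = 0) (htri : ∀ u v w, D u w ≤ D u v + D v w)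
    (hle : ∀ a b, D a b ≤ w a b) :
    ∀ (l : List V) (a b : V), l.head? = some a → l.getLast? = some b →
      D a b ≤ walkWeight w l
  | [], _, _, ha, _ => by simp at ha
  | [x], a, b, ha, hb => by
    obtain rfl : x = a := by simpa using ha
    obtain rfl : x = b := by simpa using hb
    simp [hD0]
  | x :: y :: t, a, b, ha, hb => by
    obtain rfl : x = a := by simpa using ha
    rw [List.getLast?_cons_cons] at hb
    calc D x b ≤ D x y + D y b := htri x y b
      _ ≤ w x y + walkWeight w (y :: t) :=
        add_le_add (hle x y) (le_walkWeight hD0 htri hle (y :: t) y b rfl hb)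

end Walks

section SimulatedGraph

variable {ε : ℝ} {Λ : ℕ} {level : V → ℕ} {dd : V → V → ℝ≥0∞}

theorem le_wH (hε : 0 ≤ ε) (v w : V) : dd v w ≤ wH ε Λ level dd v w :=
  le_mul_of_one_le_left' (one_le_pow₀ (ENNReal.one_le_ofReal.2 (by linarith)))

theorem wH_le_pow_mul (hε : 0 ≤ ε) (v w : V) :
    wH ε Λ level dd v w ≤ ENNReal.ofReal (1 + ε) ^ Λ * dd v w :=
  mul_le_mul_left (pow_le_pow_right₀ (ENNReal.one_le_ofReal.2 (by linarith)) (Nat.sub_le _ _)) _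

theorem distH_le_wH (v w : V) : distH ε Λ level dd v w ≤ wH ε Λ level dd v w :=
  sInf_le ⟨[v, w], ⟨List.cons_ne_nil _ _, rfl, rfl⟩, walkWeight_pair _ v w⟩

end SimulatedGraph

theorem distH_approx_general
    (ε : ℝ) (hε : 0 ≤ ε) (Λ : ℕ) (level : V → ℕ)
    (D dd : V → V → ℝ≥0∞)
    (hD0 : ∀ v, D v v = 0)
    (htri : ∀ u v w, D u w ≤ D u v + D v w)
    (hlow : ∀ v w, D v w ≤ dd v w)
    (hhigh : ∀ v w, dd v w ≤ ENNReal.ofReal (1 + ε) * D v w) :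
    ∀ v w : V, D v w ≤ distH ε Λ level dd v w ∧
      distH ε Λ level dd v w ≤ ENNReal.ofReal (1 + ε) ^ (Λ + 1) * D v w := by
  intro v w
  refine ⟨le_sInf ?_, ?_⟩
  · rintro _ ⟨l, ⟨-, hv, hw⟩, rfl⟩
    exact le_walkWeight _ D hD0 htri (fun a b => (hlow a b).trans (le_wH hε a b)) l v w hv hw
  · calc distH ε Λ level dd v w ≤ wH ε Λ level dd v w := distH_le_wH v w
      _ ≤ ENNReal.ofReal (1 + ε) ^ Λ * (ENNReal.ofReal (1 + ε) * D v w) :=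
        (wH_le_pow_mul hε v w).trans (by gcongr; exact hhigh v w)
      _ = ENNReal.ofReal (1 + ε) ^ (Λ + 1) * D v w := by rw [pow_succ, mul_assoc]

/-- The distances in the simulated graph `H` satisfy
`D(v,w) ≤ dist_H(v,w) ≤ (1+ε)^(Λ+1) · D(v,w)`. -/
theorem distH_approx [Fintype V]
    (ε : ℝ) (hε : 0 ≤ ε) (Λ : ℕ) (level : V → ℕ) (hlevel : ∀ v, level v ≤ Λ)
    (D dd : V → V → ℝ≥0∞)
    (hDsymm : ∀ v w, D v w = D w v) (hddsymm : ∀ v w, dd v w = dd w v)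
    (hD0 : ∀ v, D v v = 0) (hdd0 : ∀ v, dd v v = 0)
    (htri : ∀ u v w, D u w ≤ D u v + D v w)
    (hlow : ∀ v w, D v w ≤ dd v w)
    (hhigh : ∀ v w, dd v w ≤ ENNReal.ofReal (1 + ε) * D v w) :
    ∀ v w : V, D v w ≤ distH ε Λ level dd v w ∧
      distH ε Λ level dd v w ≤ ENNReal.ofReal (1 + ε) ^ (Λ + 1) * D v w :=
  distH_approx_general ε hε Λ level D dd hD0 htri hlow hhigh
end

section
/- For all x, y : V → ℝ≥0∞, filtering commutes with pointwise minimum in the sense that r(x ⊕ y) = r(r(x) ⊕ r(y)), where (x ⊕ y)_v = min(x_v, y_v). Consequently, if r(x) = r(x') and r(y) = r(y'), then r(x ⊕ y) = r(x' ⊕ y'). -/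
open scoped ENNReal Classical

variable {V : Type*}

/-- The LE-list filter: `r(x)_v = ∞` if some `w < v` has `x_w ≤ x_v`, else `x_v`. -/
noncomputable def leFilter [LinearOrder V] (x : V → ℝ≥0∞) (v : V) : ℝ≥0∞ :=
  if ∃ w, w < v ∧ x w ≤ x v then ⊤ else x v

/-! A value `x v` survives the filter exactly when it is a strict prefix minimum. By well-founded
induction every `x w` is bounded below by a surviving value at some `u ≤ w`; hence any `M` squeezed
between `m` and `leFilter m` has the same surviving values as `m`, and so the same filter. Taking
`m = x ⊓ y` and `M = leFilter x ⊓ leFilter y` gives the theorem. -/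

section LinearOrder

variable [LinearOrder V] {x m M : V → ℝ≥0∞} {v : V}

lemma leFilter_eq_top (h : ∃ w, w < v ∧ x w ≤ x v) : leFilter x v = ⊤ :=
  if_pos h

lemma leFilter_eq_self (h : ¬∃ w, w < v ∧ x w ≤ x v) : leFilter x v = x v :=
  if_neg h

lemma le_leFilter (x : V → ℝ≥0∞) (v : V) : x v ≤ leFilter x v := by
  unfold leFilter
  split_ifs
  exacts [le_top, le_rfl]

lemma leFilter_le_leFilter_of_le_of_eq (h : m ≤ x) (hv : x v = m v) :
    leFilter x v ≤ leFilter m v := by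
  by_cases hm : ∃ w, w < v ∧ m w ≤ m v
  · exact (leFilter_eq_top hm).symm ▸ le_top
  · have hx : ¬∃ w, w < v ∧ x w ≤ x v := fun ⟨w, hwv, hw⟩ =>
      hm ⟨w, hwv, (h w).trans (hw.trans hv.le)⟩
    rw [leFilter_eq_self hm, leFilter_eq_self hx, hv]

lemma min_leFilter_le_leFilter_min (x y : V → ℝ≥0∞) (v : V) :
    min (leFilter x v) (leFilter y v) ≤ leFilter (fun v => min (x v) (y v)) v := by
  rcases min_choice (x v) (y v) with h | h
  · exact (min_le_left _ _).trans
      (leFilter_le_leFilter_of_le_of_eq (fun w => min_le_left (x w) (y w)) h.symm)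
  · exact (min_le_right _ _).trans
      (leFilter_le_leFilter_of_le_of_eq (fun w => min_le_right (x w) (y w)) h.symm)

variable [WellFoundedLT V]

lemma exists_le_leFilter_le (x : V → ℝ≥0∞) (w : V) : ∃ u ≤ w, leFilter x u ≤ x w := by
  induction w using WellFoundedLT.induction with
  | ind w ih =>
    by_cases h : ∃ u, u < w ∧ x u ≤ x w
    · obtain ⟨u', hu'w, hu'⟩ := h
      obtain ⟨u, huu', hu⟩ := ih u' hu'w
      exact ⟨u, huu'.trans hu'w.le, hu.trans hu'⟩
    · exact ⟨w, le_rfl, (leFilter_eq_self h).le⟩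

lemma leFilter_eq_of_le_of_le_leFilter (h₁ : m ≤ M) (h₂ : M ≤ leFilter m) :
    leFilter M = leFilter m := by
  funext v
  by_cases hm : ∃ w, w < v ∧ m w ≤ m v
  · obtain ⟨w, hwv, hw⟩ := hm
    obtain ⟨u, huw, hu⟩ := exists_le_leFilter_le m w
    have hM : ∃ u, u < v ∧ M u ≤ M v :=
      ⟨u, huw.trans_lt hwv, (h₂ u).trans (hu.trans (hw.trans (h₁ v)))⟩
    rw [leFilter_eq_top hM, leFilter_eq_top ⟨w, hwv, hw⟩]
  · have hMv : M v = m v := le_antisymm ((h₂ v).trans (leFilter_eq_self hm).le) (h₁ v)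
    have hM : ¬∃ w, w < v ∧ M w ≤ M v := fun ⟨w, hwv, hw⟩ =>
      hm ⟨w, hwv, (h₁ w).trans (hw.trans hMv.le)⟩
    rw [leFilter_eq_self hM, leFilter_eq_self hm, hMv]

lemma leFilter_min_leFilter (x y : V → ℝ≥0∞) :
    leFilter (fun v => min (x v) (y v)) =
      leFilter (fun v => min (leFilter x v) (leFilter y v)) :=
  (leFilter_eq_of_le_of_le_leFilter (fun v => min_le_min (le_leFilter x v) (le_leFilter y v))
    (min_leFilter_le_leFilter_min x y)).symm

end LinearOrder

/-- Filtering commutes with the pointwise minimum: `r(x ⊕ y) = r(r(x) ⊕ r(y))`.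
Consequently, the pointwise minimum respects the induced equivalence. -/
theorem leFilter_min [Fintype V] [LinearOrder V] :
    (∀ x y : V → ℝ≥0∞,
      leFilter (fun v => min (x v) (y v)) =
        leFilter (fun v => min (leFilter x v) (leFilter y v))) ∧
    (∀ x x' y y' : V → ℝ≥0∞, leFilter x = leFilter x' → leFilter y = leFilter y' →
      leFilter (fun v => min (x v) (y v)) = leFilter (fun v => min (x' v) (y' v))) := by
  refine ⟨leFilter_min_leFilter, fun x x' y y' hx hy => ?_⟩
  rw [leFilter_min_leFilter x y, leFilter_min_leFilter x' y', hx, hy]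
end

section
/- For every real R ≥ 6·∑_{i=1}^{m} 1/i, the probability that at least R indices survive the filter is at most 2^{−R}: P_σ( |{v : r_σ(x)_v ≠ ∞}| ≥ R ) ≤ 2^{−R}. -/
open scoped ENNReal Classical
open MeasureTheory

instance (n : ℕ) : MeasurableSpace (Equiv.Perm (Fin n)) := ⊤

/-- The LE-list filter with respect to the order induced by the permutation `σ`:
`r_σ(x)_v = ∞` if some `w` with `σ w < σ v` has `x_w ≤ x_v`, else `x_v`. -/
noncomputable def rPerm {n : ℕ} (σ : Equiv.Perm (Fin n)) (x : Fin n → ℝ≥0∞)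
    (v : Fin n) : ℝ≥0∞ :=
  if ∃ w, σ w < σ v ∧ x w ≤ x v then ⊤ else x v

/-!
A vertex `v` survives `σ` exactly when `x v` is finite and `v` comes first under `σ` in its
sublevel set `{w | x w ≤ x v}`. For finite values these sublevel sets form a chain, so for a set
`T` of finite vertices the events "`v` comes first in its sublevel set", `v ∈ T`, are independent,
with probabilities `1 / k v`, `k v` the size of the sublevel set; the `k v` are distinct numbers
in `1, …, m`. A union bound over the `r`-subsets of finite vertices, `r = ⌈R⌉`, bounds the
probability by
`∑_{|T| = r} ∏_{v ∈ T} 1 / k v ≤ 4⁻ʳ ∏_v (1 + 4 / k v) ≤ 4⁻ʳ exp (4 H_m)`, and this is at most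
`2^(-R)` because `4 H_m ≤ 2R/3 ≤ R log 2`.
-/

open Finset Equiv

section PermIsMinOn

variable {α : Type*} [LinearOrder α]

theorem isMinOn_mul_swap_iff {σ : Perm α} {S : Finset α} {a b : α} (ha : a ∈ S) (hb : b ∈ S)
    (v : α) : IsMinOn ⇑(σ * swap a b) S v ↔ IsMinOn σ S (swap a b v) := by
  have hS : Set.MapsTo (swap a b) S S := (swap_bijOn_self (by simp [ha, hb])).mapsTo
  simp only [isMinOn_iff, Perm.mul_apply]
  refine ⟨fun h w hw => ?_, fun h w hw => h _ (hS hw)⟩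
  simpa using h _ (hS hw)

variable [Fintype α]

theorem card_filter_isMinOn_mul_card {P : Perm α → Prop} {S : Finset α} {v : α} (hv : v ∈ S)
    (hP : ∀ σ, ∀ a ∈ S, ∀ b ∈ S, P (σ * swap a b) ↔ P σ) :
    #{σ | P σ ∧ IsMinOn σ S v} * #S = #{σ | P σ} := by
  have hpartition :
      ({σ | P σ} : Finset (Perm α)) = S.biUnion fun a => {σ | P σ ∧ IsMinOn σ S a} := by
    ext σ
    simp only [mem_filter, mem_univ, true_and, mem_biUnion]
    refine ⟨fun h => ?_, fun ⟨_, _, h, _⟩ => h⟩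
    obtain ⟨a, ha, hmin⟩ := S.exists_min_image σ ⟨v, hv⟩
    exact ⟨a, ha, h, isMinOn_iff.2 hmin⟩
  have hdisj : (S : Set α).PairwiseDisjoint fun a => ({σ | P σ ∧ IsMinOn σ S a} : Finset _) := by
    intro a ha b hb hab
    refine disjoint_filter.2 fun σ _ h h' => hab (σ.injective (le_antisymm ?_ ?_))
    · exact isMinOn_iff.1 h.2 b hb
    · exact isMinOn_iff.1 h'.2 a ha
  -- `σ ↦ σ * swap a v` moves the minimiser of `σ` on `S` from `a` to `v`.
  have hfiber : ∀ a ∈ S, #{σ | P σ ∧ IsMinOn σ S a} = #{σ | P σ ∧ IsMinOn σ S v} := by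
    intro a ha
    refine card_nbij' (· * swap a v) (· * swap a v) ?_ ?_ ?_ ?_
    · intro σ hσ
      simp only [coe_filter, mem_univ, true_and, Set.mem_ofPred_eq] at hσ ⊢
      rw [hP σ a ha v hv, isMinOn_mul_swap_iff ha hv, swap_apply_right]
      exact hσ
    · intro σ hσ
      simp only [coe_filter, mem_univ, true_and, Set.mem_ofPred_eq] at hσ ⊢
      rw [hP σ a ha v hv, isMinOn_mul_swap_iff ha hv, swap_apply_left]
      exact hσ
    all_goals intro σ _; simp [mul_assoc]
  rw [hpartition, card_biUnion hdisj, sum_congr rfl hfiber, sum_const, smul_eq_mul, mul_comm]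

theorem card_filter_forall_isMinOn_mul_prod (A : α → Finset α) (hA : ∀ v, v ∈ A v)
    {T : Finset α}
    (hT : (T : Set α).Pairwise fun u v => A u ⊆ (A v).erase v ∨ A v ⊆ (A u).erase u)
    (P : Perm α → Prop) (hP : ∀ σ, ∀ v ∈ T, ∀ a ∈ A v, ∀ b ∈ A v, P (σ * swap a b) ↔ P σ) :
    #{σ | P σ ∧ ∀ v ∈ T, IsMinOn σ (A v) v} * ∏ v ∈ T, #(A v) = #{σ | P σ} := by
  induction T using Finset.induction_on_max_value (fun v => #(A v)) generalizing P with
  | empty => simp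
  | insert a s ha hmax ih =>
    have hsub : ∀ u ∈ s, A u ⊆ (A a).erase a := by
      intro u hu
      refine (hT (mem_insert_of_mem hu) (mem_insert_self a s) (by rintro rfl; exact ha hu))
        |>.resolve_right fun h => (hmax u hu).not_gt ?_
      exact (card_le_card h).trans_lt (card_erase_lt_of_mem (hA u))
    -- Swaps inside the smaller sets fix `a`, so they preserve minimality of `a` on `A a`.
    have hP' : ∀ σ, ∀ u ∈ s, ∀ b ∈ A u, ∀ c ∈ A u,
        (P (σ * swap b c) ∧ IsMinOn ⇑(σ * swap b c) (A a) a) ↔ (P σ ∧ IsMinOn σ (A a) a) := by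
      intro σ u hu b hb c hc
      have hb' := mem_erase.1 (hsub u hu hb)
      have hc' := mem_erase.1 (hsub u hu hc)
      rw [hP σ u (mem_insert_of_mem hu) b hb c hc, isMinOn_mul_swap_iff hb'.2 hc'.2,
        swap_apply_of_ne_of_ne hb'.1.symm hc'.1.symm]
    have hrest := ih (hT.mono (by simp)) (fun σ => P σ ∧ IsMinOn σ (A a) a) hP'
    have hhead := card_filter_isMinOn_mul_card (hA a) (hP · a (mem_insert_self a s))
    have hsplit : ({σ | P σ ∧ ∀ v ∈ insert a s, IsMinOn σ (A v) v} : Finset (Perm α)) =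
        ({σ | (P σ ∧ IsMinOn σ (A a) a) ∧ ∀ v ∈ s, IsMinOn σ (A v) v} : Finset (Perm α)) := by
      ext σ
      simp [and_assoc]
    rw [prod_insert ha, hsplit, ← hhead, mul_left_comm, mul_comm]
    congr 1
    -- the two sides differ only in their `Decidable` instances
    convert hrest

end PermIsMinOn

section Sublevel

variable {α β : Type*} [Fintype α]

def sublevel [Preorder β] [DecidableLE β] (x : α → β) (v : α) : Finset α := {w | x w ≤ x v}

theorem sublevel_subset_ne_top [PartialOrder β] [DecidableLE β] [DecidableEq β] [OrderTop β]
    {x : α → β} {v : α} (hv : x v ≠ ⊤) : sublevel x v ⊆ ({w | x w ≠ ⊤} : Finset α) := by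
  intro w
  simpa [sublevel] using ne_top_of_le_ne_top hv

section Preorder

variable [Preorder β] [DecidableLE β] {x : α → β} {u v w : α}

@[simp]
theorem mem_sublevel : w ∈ sublevel x v ↔ x w ≤ x v := by
  simp [sublevel]

theorem self_mem_sublevel (x : α → β) (v : α) : v ∈ sublevel x v :=
  mem_sublevel.2 le_rfl

variable [DecidableEq α]

theorem sublevel_subset_erase_of_lt (h : x u < x v) : sublevel x u ⊆ (sublevel x v).erase v := by
  intro w hw
  rw [mem_sublevel] at hw
  exact mem_erase.2 ⟨by rintro rfl; exact hw.not_gt h, mem_sublevel.2 (hw.trans h.le)⟩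

theorem card_sublevel_lt_of_lt (h : x u < x v) : #(sublevel x u) < #(sublevel x v) :=
  (card_le_card (sublevel_subset_erase_of_lt h)).trans_lt
    (card_erase_lt_of_mem (self_mem_sublevel x v))

end Preorder

section LinearOrder

variable [LinearOrder β] [DecidableEq α] {x : α → β} {s : Set α}

theorem pairwise_sublevel_subset_erase (hx : Set.InjOn x s) :
    s.Pairwise fun u v =>
      sublevel x u ⊆ (sublevel x v).erase v ∨ sublevel x v ⊆ (sublevel x u).erase u :=
  fun _ hu _ hv huv => ((hx.ne hu hv huv).lt_or_gt).imp
    sublevel_subset_erase_of_lt sublevel_subset_erase_of_lt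

theorem injOn_card_sublevel (hx : Set.InjOn x s) : Set.InjOn (fun v => #(sublevel x v)) s := by
  intro u hu v hv h
  by_contra huv
  rcases (hx.ne hu hv huv).lt_or_gt with hlt | hlt
  · exact (card_sublevel_lt_of_lt hlt).ne h
  · exact (card_sublevel_lt_of_lt hlt).ne' h

end LinearOrder

end Sublevel

theorem rPerm_ne_top_iff {n : ℕ} {σ : Perm (Fin n)} {x : Fin n → ℝ≥0∞} {v : Fin n} :
    rPerm σ x v ≠ ⊤ ↔ x v ≠ ⊤ ∧ IsMinOn σ (sublevel x v) v := by
  simp only [rPerm, isMinOn_iff, mem_coe, mem_sublevel]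
  split_ifs with h
  · obtain ⟨w, hlt, hle⟩ := h
    simp only [ne_eq, not_true_eq_false, false_iff, not_and]
    exact fun _ hmin => (hmin w hle).not_gt hlt
  · push Not at h
    exact ⟨fun hv => ⟨hv, fun w hw => le_of_not_gt fun hlt => (h w hlt).not_ge hw⟩, And.left⟩

theorem uniform_toMeasure_forall_isMinOn {n : ℕ} {β : Type*} [LinearOrder β] {x : Fin n → β}
    {T : Finset (Fin n)} (hx : Set.InjOn x T) :
    (PMF.uniformOfFintype (Perm (Fin n))).toMeasure {σ | ∀ v ∈ T, IsMinOn σ (sublevel x v) v} =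
      ENNReal.ofReal (∏ v ∈ T, (#(sublevel x v) : ℝ)⁻¹) := by
  have hcount := card_filter_forall_isMinOn_mul_prod (sublevel x) (self_mem_sublevel x)
    (pairwise_sublevel_subset_erase hx) (fun _ => True) (by simp)
  simp only [true_and, filter_true, card_univ] at hcount
  have hE : #{σ : Perm (Fin n) | ∀ v ∈ T, IsMinOn σ (sublevel x v) v} ≠ 0 :=
    left_ne_zero_of_mul (hcount.trans_ne Fintype.card_ne_zero)
  rw [PMF.toMeasure_uniformOfFintype_apply _ (MeasurableSpace.measurableSet_top),
    Fintype.card_subtype]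
  simp only [Set.mem_ofPred_eq]
  rw [← ENNReal.ofReal_natCast, ← ENNReal.ofReal_natCast, ← ENNReal.ofReal_div_of_pos
    (Nat.cast_pos.2 Fintype.card_pos), ← hcount, Nat.cast_mul, Nat.cast_prod,
    div_mul_cancel_left₀ (Nat.cast_ne_zero.2 hE), prod_inv_distrib]

theorem sum_powersetCard_prod_le_exp_div {ι : Type*} (s : Finset ι) {c : ι → ℝ}
    (hc : ∀ i ∈ s, 0 ≤ c i) (r : ℕ) {t : ℝ} (ht : 0 < t) :
    ∑ T ∈ powersetCard r s, ∏ i ∈ T, c i ≤ Real.exp (t * ∑ i ∈ s, c i) / t ^ r := by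
  rw [le_div_iff₀ (pow_pos ht r)]
  have htc : ∀ i ∈ s, 0 ≤ t * c i := fun i hi => mul_nonneg ht.le (hc i hi)
  calc (∑ T ∈ powersetCard r s, ∏ i ∈ T, c i) * t ^ r
      = ∑ T ∈ powersetCard r s, ∏ i ∈ T, t * c i := by
        rw [sum_mul]
        refine sum_congr rfl fun T hT => ?_
        rw [prod_mul_distrib, prod_const, (mem_powersetCard.1 hT).2, mul_comm]
    _ ≤ ∑ T ∈ s.powerset, ∏ i ∈ T, t * c i :=
        sum_le_sum_of_subset_of_nonneg (fun T hT => mem_powerset.2 (mem_powersetCard.1 hT).1)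
          fun T hT _ => prod_nonneg fun i hi => htc i (mem_powerset.1 hT hi)
    _ = ∏ i ∈ s, (1 + t * c i) := (prod_one_add s).symm
    _ ≤ ∏ i ∈ s, Real.exp (t * c i) :=
        prod_le_prod (fun i hi => by linarith [htc i hi]) fun i _ => by
          linarith [Real.add_one_le_exp (t * c i)]
    _ = Real.exp (t * ∑ i ∈ s, c i) := by rw [mul_sum, Real.exp_sum]

theorem sum_inv_le_sum_Icc_inv {ι : Type*} {s : Finset ι} {f : ι → ℕ} {m : ℕ}
    (hf : Set.InjOn f s) (hpos : ∀ i ∈ s, 1 ≤ f i) (hle : ∀ i ∈ s, f i ≤ m) :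
    ∑ i ∈ s, (f i : ℝ)⁻¹ ≤ ∑ j ∈ Icc 1 m, (1 : ℝ) / j := by
  simp only [one_div]
  rw [← sum_image (f := fun j : ℕ => (j : ℝ)⁻¹) hf]
  refine sum_le_sum_of_subset_of_nonneg ?_ fun _ _ _ => by positivity
  intro j hj
  obtain ⟨i, hi, rfl⟩ := mem_image.1 hj
  exact mem_Icc.2 ⟨hpos i hi, hle i hi⟩

theorem exp_div_four_pow_le_two_rpow_neg {s R : ℝ} {r : ℕ} (hsR : 6 * s ≤ R)
    (hRr : R ≤ r) : Real.exp (4 * s) / 4 ^ r ≤ 2 ^ (-R) := by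
  have hlog2 := Real.log_two_gt_d9
  have h4 : (4 : ℝ) ^ r = Real.exp (2 * r * Real.log 2) := by
    rw [mul_comm 2, mul_assoc, Real.exp_nat_mul, ← Real.log_rpow two_pos,
      Real.exp_log (by positivity)]
    norm_num
  rw [h4, ← Real.exp_sub, Real.rpow_def_of_pos two_pos]
  exact Real.exp_le_exp.2 (by nlinarith)

theorem exists_mem_powersetCard_forall_isMinOn {n : ℕ} {σ : Perm (Fin n)} {x : Fin n → ℝ≥0∞}
    {r : ℕ} (h : r ≤ ({v | rPerm σ x v ≠ ⊤} : Set (Fin n)).ncard) :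
    ∃ T ∈ powersetCard r ({v | x v ≠ ⊤} : Finset (Fin n)),
      ∀ v ∈ T, IsMinOn σ (sublevel x v) v := by
  rw [← coe_filter_univ, Set.ncard_coe_finset] at h
  obtain ⟨T, hT, rfl⟩ := exists_subset_card_eq h
  have hsurv : ∀ v ∈ T, x v ≠ ⊤ ∧ IsMinOn σ (sublevel x v) v :=
    fun v hv => rPerm_ne_top_iff.1 (mem_filter.1 (hT hv)).2
  exact ⟨T, mem_powersetCard.2 ⟨fun v hv => by simpa using (hsurv v hv).1, rfl⟩,
    fun v hv => (hsurv v hv).2⟩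

/-- For every `R ≥ 6 · H_m` (the `m`-th harmonic number, `m` the number of non-`∞`
entries of `x`), the probability over a uniformly random permutation `σ` that at least
`R` indices survive the filter is at most `2^{-R}`. -/
theorem survivors_tail_bound (n : ℕ) (x : Fin n → ℝ≥0∞)
    (hinj : Set.InjOn x {v | x v ≠ ⊤})
    (R : ℝ)
    (hR : 6 * ∑ i ∈ Finset.Icc 1 ({v : Fin n | x v ≠ ⊤}).ncard, (1 : ℝ) / i ≤ R) :
    (PMF.uniformOfFintype (Equiv.Perm (Fin n))).toMeasure
        {σ | R ≤ (({v | rPerm σ x v ≠ ⊤} : Set (Fin n)).ncard : ℝ)} ≤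
      (2 : ℝ≥0∞) ^ (-R) := by
  set F : Finset (Fin n) := {v | x v ≠ ⊤}
  have hF : (F : Set (Fin n)) = {v | x v ≠ ⊤} := coe_filter_univ _
  rw [← hF, Set.ncard_coe_finset] at hR
  rw [← hF] at hinj
  have hsurv : {σ | R ≤ (({v | rPerm σ x v ≠ ⊤} : Set (Fin n)).ncard : ℝ)} ⊆
      ⋃ T ∈ powersetCard ⌈R⌉₊ F, {σ | ∀ v ∈ T, IsMinOn σ (sublevel x v) v} := by
    intro σ (hσ : R ≤ _)
    obtain ⟨T, hT, hmin⟩ := exists_mem_powersetCard_forall_isMinOn (Nat.ceil_le.2 hσ)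
    exact Set.mem_biUnion hT hmin
  have hharmonic : ∑ v ∈ F, (#(sublevel x v) : ℝ)⁻¹ ≤ ∑ j ∈ Icc 1 #F, (1 : ℝ) / j :=
    sum_inv_le_sum_Icc_inv (injOn_card_sublevel hinj)
      (fun v _ => card_pos.2 ⟨v, self_mem_sublevel x v⟩)
      (fun v hv => card_le_card (sublevel_subset_ne_top (mem_filter.1 hv).2))
  calc _ ≤ ∑ T ∈ powersetCard ⌈R⌉₊ F, (PMF.uniformOfFintype (Perm (Fin n))).toMeasure
          {σ | ∀ v ∈ T, IsMinOn σ (sublevel x v) v} :=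
        (measure_mono hsurv).trans (measure_biUnion_finset_le _ _)
    _ = ENNReal.ofReal (∑ T ∈ powersetCard ⌈R⌉₊ F, ∏ v ∈ T, (#(sublevel x v) : ℝ)⁻¹) := by
        rw [ENNReal.ofReal_sum_of_nonneg fun T _ => prod_nonneg fun v _ => by positivity]
        exact sum_congr rfl fun T hT =>
          uniform_toMeasure_forall_isMinOn (hinj.mono (mem_powersetCard.1 hT).1)
    _ ≤ ENNReal.ofReal (Real.exp (4 * ∑ v ∈ F, (#(sublevel x v) : ℝ)⁻¹) / 4 ^ ⌈R⌉₊) :=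
        ENNReal.ofReal_le_ofReal
          (sum_powersetCard_prod_le_exp_div F (fun _ _ => by positivity) _ four_pos)
    _ ≤ ENNReal.ofReal (2 ^ (-R)) :=
        ENNReal.ofReal_le_ofReal
          (exp_div_four_pow_le_two_rpow_neg (by linarith) (Nat.le_ceil R))
    _ = 2 ^ (-R) := by
        rw [← ENNReal.ofReal_rpow_of_pos two_pos, ENNReal.ofReal_ofNat]
end
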